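/- For every prime power q, the affine group G_q = F ⋊ Fˣ satisfies the unique intersection number condition: for every pair of distinct conjugacy classes C_h ≠ C_i of G_q there is exactly one conjugacy class C_j with C_h ∩ C_iC_j ≠ ∅. -/

import Mathlib

open Pointwise

/-- A group `G` satisfies the *unique intersection number condition* (condition (3) of
Tanaka's theorem, equivalent to the Terwilliger algebra of the group association scheme of `G`
being almost commutative) if for every pair of distinct conjugacy classes `Ch ≠ Ci` of `G`
there is exactly one conjugacy class `Cj` with `Ch ∩ (Ci * Cj) ≠ ∅`. -/
def UniqueIntersectionNumberCondition (G : Type*) [Group G] : Prop :=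
  ∀ Ch Ci : ConjClasses G, Ch ≠ Ci →
    ∃! Cj : ConjClasses G, (Ch.carrier ∩ (Ci.carrier * Cj.carrier)).Nonempty

/-- The canonical homomorphism from additive automorphisms of `A` to multiplicative
automorphisms of `Multiplicative A`. -/
def addAutToMulAut (A : Type*) [AddGroup A] : Multiplicative (AddAut A) →* MulAut (Multiplicative A) where
  toFun f := AddEquiv.toMultiplicative f.toAdd
  map_one' := rfl
  map_mul' _ _ := rfl

/-- The action of the unit group `Fˣ` on the additive group of the field `F`
by multiplication. -/
def affineAction (F : Type*) [Field F] : Fˣ →* MulAut (Multiplicative F) :=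
  (addAutToMulAut F).comp (DistribMulAction.toAddAut Fˣ F)

/-- The one-dimensional affine group `G_q = F ⋊ Fˣ` of a field `F`: the semidirect product of
the additive group of `F` by its multiplicative group acting by multiplication. -/
abbrev AffineGroup (F : Type*) [Field F] : Type _ :=
  SemidirectProduct (Multiplicative F) Fˣ (affineAction F)

section Helpers

variable {F : Type*} [Field F]

lemma aff_apply (u : Fˣ) (m : Multiplicative F) :
    affineAction F u m = Multiplicative.ofAdd ((u : F) * m.toAdd) := rfl

lemma isConj_aff_iff {g h : AffineGroup F} :
    IsConj g h ↔ g.right = h.right ∧ (g.right = 1 → (g.left = 1 ↔ h.left = 1)) := by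
  constructor
  · rw [isConj_iff]
    rintro ⟨c, hc⟩
    have hc' : c * g = h * c := by rw [← hc]; group
    have hr : g.right = h.right := by
      have := congrArg SemidirectProduct.right hc'
      simp only [SemidirectProduct.mul_right] at this
      rw [mul_comm h.right] at this
      exact mul_left_cancel this
    refine ⟨hr, fun h1 => ?_⟩
    have hl := congrArg SemidirectProduct.left hc'
    rw [SemidirectProduct.mul_left, SemidirectProduct.mul_left, ← hr, h1, map_one] at hl
    -- hl : c.left * (affineAction F c.right) g.left = h.left * c.left
    have : (affineAction F c.right) g.left = h.left := by
      have := hl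
      rw [mul_comm h.left] at this
      exact mul_left_cancel this
    rw [← this]
    exact (EmbeddingLike.map_eq_one_iff (f := affineAction F c.right)).symm
  · rintro ⟨hr, hcond⟩
    by_cases hb : g.right = 1
    · have hb' : h.right = 1 := hr ▸ hb
      have iff1 := hcond hb
      by_cases hg1 : g.left = 1
      · have : g = h := SemidirectProduct.ext (by rw [hg1, iff1.mp hg1]) hr
        rw [this]
      · have hh1 : h.left ≠ 1 := fun e => hg1 (iff1.mpr e)
        have ha0 : Multiplicative.toAdd g.left ≠ 0 := fun e => hg1 (by
          rw [← ofAdd_toAdd g.left, e, ofAdd_zero])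
        have hb0 : Multiplicative.toAdd h.left ≠ 0 := fun e => hh1 (by
          rw [← ofAdd_toAdd h.left, e, ofAdd_zero])
        rw [isConj_iff]
        refine ⟨SemidirectProduct.inr (Units.mk0 (Multiplicative.toAdd h.left /
          Multiplicative.toAdd g.left) (div_ne_zero hb0 ha0)), ?_⟩
        rw [mul_inv_eq_iff_eq_mul]
        refine SemidirectProduct.ext ?_ ?_
        · simp only [SemidirectProduct.mul_left, SemidirectProduct.left_inr,
            SemidirectProduct.right_inr, hb', map_one, MulAut.one_apply, one_mul, mul_one,
            aff_apply]
          rw [Units.val_mk0, div_mul_cancel₀ _ ha0, ofAdd_toAdd]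
        · simp [hb, hb']
    · have hbF : ((g.right : Fˣ) : F) ≠ 1 := fun e => hb (Units.ext e)
      rw [isConj_iff]
      refine ⟨SemidirectProduct.inl (Multiplicative.ofAdd
        ((Multiplicative.toAdd h.left - Multiplicative.toAdd g.left) / (1 - (g.right : F)))), ?_⟩
      rw [mul_inv_eq_iff_eq_mul]
      refine SemidirectProduct.ext ?_ ?_
      · simp only [SemidirectProduct.mul_left, SemidirectProduct.left_inl,
          SemidirectProduct.right_inl, map_one, MulAut.one_apply, aff_apply, ← hr]
        rw [toAdd_ofAdd, ← ofAdd_toAdd g.left, ← ofAdd_toAdd h.left, ← ofAdd_add, ← ofAdd_add]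
        congr 1
        have h1 : (1 : F) - (g.right : F) ≠ 0 := sub_ne_zero.mpr (fun e => hbF e.symm)
        field_simp
        simp only [toAdd_ofAdd]
        ring
      · simp [← hr]

end Helpers

/-- For every prime power `q`, the affine group `G_q = F ⋊ Fˣ` of the finite field `F` of
order `q` satisfies the unique intersection number condition. -/
theorem affineGroup_uniqueIntersectionNumberCondition (q : ℕ) (hq : IsPrimePow q)
    (F : Type*) [Field F] [Fintype F] (hF : Fintype.card F = q) :
    UniqueIntersectionNumberCondition (AffineGroup F) := by
  intro Ch Ci hne
  obtain ⟨g, rfl⟩ := ConjClasses.mk_surjective Ch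
  obtain ⟨x, rfl⟩ := ConjClasses.mk_surjective Ci
  refine ⟨ConjClasses.mk (x⁻¹ * g), ⟨g, ConjClasses.mem_carrier_mk, ?_⟩, ?_⟩
  · have := Set.mul_mem_mul (ConjClasses.mem_carrier_mk (a := x))
      (ConjClasses.mem_carrier_mk (a := x⁻¹ * g))
    rwa [mul_inv_cancel_left] at this
  · rintro Cj ⟨z, hz1, hz2⟩
    rw [Set.mem_mul] at hz2
    obtain ⟨x', hx', y', hy', rfl⟩ := hz2
    have hgz : IsConj (x' * y') g :=
      ConjClasses.mk_eq_mk_iff_isConj.mp (ConjClasses.mem_carrier_iff_mk_eq.mp hz1)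
    have hxx' : IsConj x' x :=
      ConjClasses.mk_eq_mk_iff_isConj.mp (ConjClasses.mem_carrier_iff_mk_eq.mp hx')
    rw [← ConjClasses.mem_carrier_iff_mk_eq.mp hy', ConjClasses.mk_eq_mk_iff_isConj]
    have h1 := (isConj_aff_iff.mp hgz).1
    have h2 := (isConj_aff_iff.mp hxx').1
    rw [SemidirectProduct.mul_right] at h1
    have hry : y'.right = (x⁻¹ * g).right := by
      rw [SemidirectProduct.mul_right, SemidirectProduct.inv_right, ← h1, ← h2,
        inv_mul_cancel_left]
    rw [isConj_aff_iff]
    refine ⟨hry, fun h1' => ?_⟩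
    have hxr : x.right = g.right := by
      rw [h1', SemidirectProduct.mul_right, SemidirectProduct.inv_right,
        eq_inv_mul_iff_mul_eq, mul_one] at hry
      exact hry
    by_cases hb1 : g.right = 1
    · -- all right components are 1
      have hx1 : x.right = 1 := hxr.trans hb1
      have hne' : x.left ≠ g.left := by
        intro e
        exact hne (ConjClasses.mk_eq_mk_iff_isConj.mpr
          (by rw [SemidirectProduct.ext e (hx1.trans hb1.symm)])).symm
      have claim1 : (x⁻¹ * g).left ≠ 1 := by
        simp only [SemidirectProduct.mul_left, SemidirectProduct.inv_left,
          SemidirectProduct.inv_right, hx1, inv_one, map_one, MulAut.one_apply]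
        intro e
        exact hne' (inv_mul_eq_one.mp e)
      have claim2 : y'.left ≠ 1 := by
        intro e
        have hy1 : y' = 1 := SemidirectProduct.ext e (by rw [h1', SemidirectProduct.one_right])
        rw [hy1, mul_one] at hgz
        exact hne (ConjClasses.mk_eq_mk_iff_isConj.mpr (hgz.symm.trans hxx'))
      exact iff_of_false claim2 claim1
    · exact absurd (ConjClasses.mk_eq_mk_iff_isConj.mpr
        (isConj_aff_iff.mpr ⟨hxr.symm, fun e => absurd e hb1⟩)) hne
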